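/- arXiv:1710.10533 — 2 statements merged into one kernel-verified Lean document; each statement's English description precedes it below -/
import Mathlib

section
/- In the Clifford algebra Cl over ℂ of the quadratic form Q(u⊕v) = Σ_{i=1}^4 u_i v_i on ℂ⁴⊕ℂ⁴, with a_i = ι(e_i⊕0), a^i = ι(0⊕e_i), E^i_j := a^i a_j, ⟨E⟩ := Σ_{c=1}^4 E^c_c, S̄^i := (1/6) Σ ε^{iklm} a_k a_l a_m and S_j := (1/6) Σ ε_{jklm} a^k a^l a^m, the quadratic anticommutation relation S̄^i S_j + S_j S̄^i = E^i_j(⟨E⟩ − 2) + δ^i_j(−½⟨E⟩² + (3/2)⟨E⟩) − δ^i_j holds for all i,j ∈ {1,…,4}. -/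
open scoped BigOperators

/-- The bilinear form `B((u,v),(u',v')) = Σᵢ uᵢ v'ᵢ` on `ℂ⁴ ⊕ ℂ⁴`. -/
noncomputable def fermB : (Fin 4 → ℂ) × (Fin 4 → ℂ) →ₗ[ℂ]
    (Fin 4 → ℂ) × (Fin 4 → ℂ) →ₗ[ℂ] ℂ :=
  LinearMap.mk₂ ℂ (fun w w' => ∑ i : Fin 4, w.1 i * w'.2 i)
    (by intro m₁ m₂ n; simp [add_mul, Finset.sum_add_distrib])
    (by intro t m n; simp [Finset.mul_sum, mul_assoc])
    (by intro m n₁ n₂; simp [mul_add, Finset.sum_add_distrib])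
    (by intro t m n; simp [Finset.mul_sum, mul_left_comm])

/-- The quadratic form `Q(u ⊕ v) = Σᵢ uᵢ vᵢ` on `ℂ⁴ ⊕ ℂ⁴`. -/
noncomputable def fermQ : QuadraticForm ℂ ((Fin 4 → ℂ) × (Fin 4 → ℂ)) :=
  LinearMap.BilinMap.toQuadraticMap fermB

/-- The Clifford algebra of `fermQ`. -/
noncomputable abbrev Cl := CliffordAlgebra fermQ

/-- The fermionic annihilation operators `a_i = ι(e_i ⊕ 0)`. -/
noncomputable def aLow (i : Fin 4) : Cl :=
  CliffordAlgebra.ι fermQ (Pi.single i 1, 0)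

/-- The fermionic creation operators `a^i = ι(0 ⊕ e_i)`. -/
noncomputable def aUp (i : Fin 4) : Cl :=
  CliffordAlgebra.ι fermQ (0, Pi.single i 1)

/-- The even generators `E^i_j = a^i a_j` of the fermionic oscillator realization. -/
noncomputable def fermE (i j : Fin 4) : Cl := aUp i * aLow j

/-- The four-index Levi-Civita symbol: `ε(i,j,k,l)` is the sign of the permutation
`(0,1,2,3) ↦ (i,j,k,l)` when the indices are pairwise distinct, and `0` otherwise. -/
noncomputable def lc (i j k l : Fin 4) : ℂ :=
  ∑ σ : Equiv.Perm (Fin 4),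
    if σ 0 = i ∧ σ 1 = j ∧ σ 2 = k ∧ σ 3 = l then ((Equiv.Perm.sign σ : ℤ) : ℂ) else 0

/-- The odd generators `S̄^i = (1/6) Σ ε^{iklm} a_k a_l a_m`. -/
noncomputable def fermSbar (i : Fin 4) : Cl :=
  (1 / 6 : ℂ) • ∑ k : Fin 4, ∑ l : Fin 4, ∑ m : Fin 4,
    lc i k l m • (aLow k * aLow l * aLow m)

/-- The odd generators `S_j = (1/6) Σ ε_{jklm} a^k a^l a^m`. -/
noncomputable def fermS (j : Fin 4) : Cl :=
  (1 / 6 : ℂ) • ∑ k : Fin 4, ∑ l : Fin 4, ∑ m : Fin 4,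
    lc j k l m • (aUp k * aUp l * aUp m)

/-- The trace `⟨E⟩ = Σ_c E^c_c` of the fermionic oscillator realization. -/
noncomputable def fermTrE : Cl := ∑ c : Fin 4, fermE c c


/-!
Because the `a_k` anticommute, each `ε`-contraction collapses to one monomial:
`S̄^i = ± ∏_{k ≠ i} a_k` and `S_j = ± ∏_{k ≠ j} a^k`, with the sign of the permutation
`(i, k₁, k₂, k₃)`. The relation then becomes an identity between explicit fermionic
polynomials, which the canonical anticommutation relations bring to normal order
(creators to the left of annihilators, each kind in increasing index), where both sides agree.
-/

open CliffordAlgebra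

lemma fermB_apply (w w' : (Fin 4 → ℂ) × (Fin 4 → ℂ)) :
    fermB w w' = ∑ i, w.1 i * w'.2 i := rfl

lemma fermQ_apply (w : (Fin 4 → ℂ) × (Fin 4 → ℂ)) : fermQ w = ∑ i, w.1 i * w.2 i := rfl

lemma polar_fermQ (w w' : (Fin 4 → ℂ) × (Fin 4 → ℂ)) :
    QuadraticMap.polar fermQ w w' = ∑ i, (w.1 i * w'.2 i + w'.1 i * w.2 i) := by
  rw [fermQ, LinearMap.BilinMap.polar_toQuadraticMap, fermB_apply, fermB_apply,
    Finset.sum_add_distrib]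

lemma aLow_mul_aLow_add (i j : Fin 4) : aLow i * aLow j + aLow j * aLow i = 0 := by
  simp [aLow, ι_mul_ι_add_swap, polar_fermQ]

lemma aUp_mul_aUp_add (i j : Fin 4) : aUp i * aUp j + aUp j * aUp i = 0 := by
  simp [aUp, ι_mul_ι_add_swap, polar_fermQ]

lemma aLow_mul_aUp_add (i j : Fin 4) :
    aLow i * aUp j + aUp j * aLow i = if i = j then 1 else 0 := by
  simp [aLow, aUp, ι_mul_ι_add_swap, polar_fermQ, Pi.single_apply, eq_comm]

lemma aLow_mul_aLow (i j : Fin 4) : aLow i * aLow j = -(aLow j * aLow i) :=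
  eq_neg_of_add_eq_zero_left (aLow_mul_aLow_add i j)

lemma aUp_mul_aUp_mul (i j : Fin 4) (y : Cl) :
    aUp i * (aUp j * y) = -(aUp j * (aUp i * y)) := by
  rw [← mul_assoc, eq_neg_of_add_eq_zero_left (aUp_mul_aUp_add i j), neg_mul, mul_assoc]

lemma aLow_mul_aUp (i j : Fin 4) :
    aLow i * aUp j = (if i = j then 1 else 0) - aUp j * aLow i :=
  eq_sub_of_add_eq (aLow_mul_aUp_add i j)

lemma aLow_mul_aUp_mul (i j : Fin 4) (y : Cl) :
    aLow i * (aUp j * y) = (if i = j then y else 0) - aUp j * (aLow i * y) := by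
  rw [← mul_assoc, aLow_mul_aUp, sub_mul, ite_mul, one_mul, zero_mul, mul_assoc]

lemma aLow_mul_self (i : Fin 4) : aLow i * aLow i = 0 := by
  rw [aLow, ι_sq_scalar, fermQ_apply]
  simp

lemma aUp_mul_self_mul (i : Fin 4) (y : Cl) : aUp i * (aUp i * y) = 0 := by
  rw [← mul_assoc, aUp, ι_sq_scalar, fermQ_apply]
  simp

def pairSign (a b : Fin 4) : ℤ := if a < b then 1 else if b < a then -1 else 0

lemma lc_eq_prod_pairSign (i j k l : Fin 4) :
    lc i j k l = ((pairSign i j * pairSign i k * pairSign i l * pairSign j k * pairSign j l *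
      pairSign k l : ℤ) : ℂ) := by
  -- the sign of a permutation is the product of the orientations of its index pairs
  have table : ∀ i j k l : Fin 4, (∑ σ : Equiv.Perm (Fin 4),
      if σ 0 = i ∧ σ 1 = j ∧ σ 2 = k ∧ σ 3 = l then (Equiv.Perm.sign σ : ℤ) else 0) =
      pairSign i j * pairSign i k * pairSign i l * pairSign j k * pairSign j l * pairSign k l := by
    decide
  rw [lc, ← table]
  push_cast [apply_ite (fun z : ℤ => (z : ℂ))]
  rfl

section AnticommutingFamily

variable {A : Type*} [Ring A] [Module ℂ A]

def complMonomial (x : Fin 4 → A) : Fin 4 → A :=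
  ![x 1 * x 2 * x 3, -(x 0 * x 2 * x 3), x 0 * x 1 * x 3, -(x 0 * x 1 * x 2)]

lemma lc_contract_eq_complMonomial (x : Fin 4 → A) (hx : ∀ k l, x k * x l + x l * x k = 0)
    (i : Fin 4) :
    (1 / 6 : ℂ) • ∑ k, ∑ l, ∑ m, lc i k l m • (x k * x l * x m) = complMonomial x i := by
  -- the guard `l < k` orients the anticommutation rules, so that `simp` sorts every monomial
  have swap : ∀ k l, l < k → x k * x l = -(x l * x k) := fun k l _ =>
    eq_neg_of_add_eq_zero_left (hx k l)
  have swap_mul : ∀ k l y, l < k → x k * (x l * y) = -(x l * (x k * y)) := fun k l y h => by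
    rw [← mul_assoc, swap k l h, neg_mul, mul_assoc]
  fin_cases i <;>
  simp only [Fin.sum_univ_four, Fin.isValue, Fin.zero_eta, Fin.mk_one, Fin.reduceFinMk,
    Fin.reduceEq, Fin.reduceLT, Fin.lt_one_iff, Nat.reduceAdd, not_lt_zero, lt_self_iff_false,
    zero_lt_one, one_ne_zero, lc_eq_prod_pairSign, pairSign, ↓reduceIte, ite_self, mul_ite,
    Int.reduceNeg, Int.cast_ite, Int.cast_one, Int.cast_zero, Int.cast_neg, ite_smul, one_smul,
    zero_smul, neg_smul, smul_add, smul_neg, one_div, mul_assoc, mul_one, mul_zero, mul_neg,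
    neg_zero, neg_neg, zero_add, add_zero, swap, swap_mul, complMonomial, Matrix.cons_val_zero,
    Matrix.cons_val_one, Matrix.cons_val] <;>
  module

end AnticommutingFamily

lemma fermSbar_eq_complMonomial (i : Fin 4) : fermSbar i = complMonomial aLow i :=
  lc_contract_eq_complMonomial aLow aLow_mul_aLow_add i

lemma fermS_eq_complMonomial (j : Fin 4) : fermS j = complMonomial aUp j :=
  lc_contract_eq_complMonomial aUp aUp_mul_aUp_add j

/-- The quadratic anticommutation relation of the fermionic oscillator realization:
`{S̄^i, S_j} = E^i_j(⟨E⟩ − 2) + δ^i_j(−½⟨E⟩² + (3/2)⟨E⟩) − δ^i_j`. -/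
theorem fermS_anticommutator (i j : Fin 4) :
    fermSbar i * fermS j + fermS j * fermSbar i =
      fermE i j * (fermTrE - 2) +
        (if i = j then (-(1 / 2 : ℂ)) • (fermTrE * fermTrE) + (3 / 2 : ℂ) • fermTrE
          else 0) -
        (if i = j then 1 else 0) := by
  -- as in `lc_contract_eq_complMonomial`, the guards orient the rules for `simp`
  have low_swap : ∀ k l : Fin 4, l < k → aLow k * aLow l = -(aLow l * aLow k) :=
    fun k l _ => aLow_mul_aLow k l
  have up_swap_mul : ∀ k l : Fin 4, l < k → ∀ y, aUp k * (aUp l * y) = -(aUp l * (aUp k * y)) :=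
    fun k l _ => aUp_mul_aUp_mul k l
  rw [fermSbar_eq_complMonomial, fermS_eq_complMonomial]
  fin_cases i <;> fin_cases j <;>
  · simp only [complMonomial, fermE, fermTrE, Fin.sum_univ_four, Fin.isValue, Fin.zero_eta,
      Fin.mk_one, Fin.reduceFinMk, Fin.reduceEq, Fin.reduceLT, zero_lt_one, zero_ne_one,
      one_ne_zero, Matrix.cons_val_zero, Matrix.cons_val_one, Matrix.cons_val, ↓reduceIte,
      mul_assoc, mul_add, add_mul, mul_sub, mul_neg, neg_mul, mul_one, mul_zero, smul_add,
      smul_neg, neg_smul, one_div, zero_add, add_zero, zero_sub, sub_zero, neg_sub, neg_neg,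
      mul_two, neg_zero, neg_add_rev, sub_neg_eq_add, add_sub_add_right_eq_sub, aLow_mul_aUp,
      aLow_mul_aUp_mul, aLow_mul_self, aUp_mul_self_mul, low_swap, up_swap_mul]
    module
end

section
/- Let gl(4,ℂ) be the Lie algebra of 4×4 complex matrices with commutator bracket and matrix units E_{ab}. Let V be a Lie module over gl(4,ℂ) and v ∈ V a nonzero vector with E_{ab} ⬝ v = 0 for all a > b and E_{aa} ⬝ v = μ_a • v for scalars μ_1,…,μ_4 ∈ ℂ. Define d = ½(μ_1+μ_2−μ_3−μ_4), j_1 = ½(μ_2−μ_1), j_2 = ½(μ_4−μ_3). Let P_0 be the 4×4 matrix ½·[[I₂, I₂],[−I₂, −I₂]] (2×2 blocks) and, for k = 1,2,3, let P_k = ½·[[σ_k, σ_k],[−σ_k, −σ_k]] with σ_k the Pauli matrices. If P_0 ⬝ (P_0 ⬝ v) − Σ_{k=1}^3 P_k ⬝ (P_k ⬝ v) = 0, then d(d−1) = j_1(j_1+1) + j_2(j_2+1) − 2 j_1 j_2. -/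
open scoped BigOperators

attribute [local instance 100] LieRing.ofAssociativeRing

/-- The matrix unit `E_{ab}` of `gl(4,ℂ)`. -/
noncomputable def glE (a b : Fin 4) : Matrix (Fin 4) (Fin 4) ℂ :=
  Matrix.single a b 1

/-- The Pauli matrices `σ₁, σ₂, σ₃`. -/
noncomputable def pauli : Fin 3 → Matrix (Fin 2) (Fin 2) ℂ :=
  ![!![0, 1; 1, 0], !![0, -Complex.I; Complex.I, 0], !![1, 0; 0, -1]]

/-- The translation generator `P₀ = ½·[[I₂, I₂], [−I₂, −I₂]]` in the fundamental
representation. -/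
noncomputable def transP0 : Matrix (Fin 4) (Fin 4) ℂ :=
  (1 / 2 : ℂ) •
    (Matrix.reindex (finSumFinEquiv (m := 2) (n := 2)) (finSumFinEquiv (m := 2) (n := 2))
      (Matrix.fromBlocks (1 : Matrix (Fin 2) (Fin 2) ℂ) 1 (-1) (-1)) :
      Matrix (Fin 4) (Fin 4) ℂ)

/-- The translation generators `P_k = ½·[[σ_k, σ_k], [−σ_k, −σ_k]]`, `k = 1,2,3`,
in the fundamental representation. -/
noncomputable def transP (k : Fin 3) : Matrix (Fin 4) (Fin 4) ℂ :=
  (1 / 2 : ℂ) •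
    (Matrix.reindex (finSumFinEquiv (m := 2) (n := 2)) (finSumFinEquiv (m := 2) (n := 2))
      (Matrix.fromBlocks (pauli k) (pauli k) (-pauli k) (-pauli k)) :
      Matrix (Fin 4) (Fin 4) ℂ)

/-!
In the fundamental representation any two translations multiply to zero, so they commute and the
mass operator factorises in light-cone form,
`P₀² - P₃² - (P₁² + P₂²) = (P₀ + P₃)(P₀ - P₃) - (P₁ + i P₂)(P₁ - i P₂)`,
each factor being a signed sum of four matrix units. Applied to the lowest-weight vector `v` this
gives `c • v + y₂ + y₄` with `c = (μ₀ - μ₂)(μ₁ - μ₃) + μ₂ - μ₁`, where `y₂`, `y₄` are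
eigenvectors of `diag(1, 1, -1, -1)` whose eigenvalues exceed that of `v` by `2` and `4`.
Masslessness therefore forces `c v = 0`, i.e. `c = 0`, which is the claimed relation.
-/

open Matrix

section LieModule

variable {R L M : Type*} [CommRing R] [LieRing L] [LieAlgebra R L] [AddCommGroup M] [Module R M]
  [LieRingModule L M] [LieModule R L M]

lemma lie_lie_sub_lie_lie_of_lie_eq_zero {A B : L} (h : ⁅A, B⁆ = 0) (m : M) :
    ⁅A, ⁅A, m⁆⁆ - ⁅B, ⁅B, m⁆⁆ = ⁅A + B, ⁅A - B, m⁆⁆ := by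
  have hBA : ⁅B, ⁅A, m⁆⁆ = ⁅A, ⁅B, m⁆⁆ := by
    rw [← sub_eq_zero, ← lie_lie, ← lie_skew, h, neg_zero, zero_lie]
  rw [sub_lie, lie_sub, add_lie, add_lie, hBA]
  abel

lemma lie_lie_add_lie_lie_of_lie_eq_zero {A B : L} (h : ⁅A, B⁆ = 0) {i : R} (hi : i * i = -1)
    (m : M) : ⁅A, ⁅A, m⁆⁆ + ⁅B, ⁅B, m⁆⁆ = ⁅A + i • B, ⁅A - i • B, m⁆⁆ := by
  rw [← lie_lie_sub_lie_lie_of_lie_eq_zero (by rw [lie_smul, h, smul_zero])]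
  simp only [smul_lie, lie_smul, smul_smul, hi, neg_one_smul, sub_neg_eq_add]

lemma lie_lie_of_lie_eq_zero {y : L} {m : M} (h : ⁅y, m⁆ = 0) (x : L) :
    ⁅y, ⁅x, m⁆⁆ = ⁅⁅y, x⁆, m⁆ := by
  rw [leibniz_lie, h, lie_zero, add_zero]

lemma lie_lie_of_lie_eq_smul {y : L} {m : M} {c : R} (h : ⁅y, m⁆ = c • m) (x : L) :
    ⁅y, ⁅x, m⁆⁆ = ⁅⁅y, x⁆, m⁆ + c • ⁅x, m⁆ := by
  rw [leibniz_lie, h, lie_smul]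

end LieModule

lemma Module.End.sub_mul_sub_smul_eq_zero_of_add_add_eq_zero {R M : Type*} [CommRing R]
    [AddCommGroup M] [Module R M] (f : Module.End R M) {x y z : M} {a b c : R}
    (hx : f x = a • x) (hy : f y = b • y) (hz : f z = c • z) (h : x + y + z = 0) :
    ((a - b) * (a - c)) • x = 0 := by
  -- `(f - b) ∘ (f - c)` kills `y` and `z` and multiplies `x` by `(a - b) * (a - c)`.
  have h₁ : a • x + b • y + c • z = 0 := by
    rw [← hx, ← hy, ← hz, ← map_add, ← map_add, h, map_zero]
  have h₂ : (a * a) • x + (b * b) • y + (c * c) • z = 0 := by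
    rw [mul_smul, mul_smul, mul_smul, ← hx, ← hy, ← hz, ← map_smul, ← map_smul, ← map_smul,
      ← map_add, ← map_add, h₁, map_zero]
  linear_combination (norm := module) (b * c) • h - (b + c) • h₁ + h₂

lemma glE_mul (a b c d : Fin 4) : glE a b * glE c d = if b = c then glE a d else 0 := by
  unfold glE
  split_ifs with h
  · rw [h, single_mul_single_same, one_mul]
  · simp [h]

lemma glE_lie (a b c d : Fin 4) :
    ⁅glE a b, glE c d⁆ = (if b = c then glE a d else 0) - (if d = a then glE c b else 0) := by
  rw [Ring.lie_def, glE_mul, glE_mul]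

lemma diagonal_lie_glE (s : Fin 4 → ℂ) (a b : Fin 4) :
    ⁅diagonal s, glE a b⁆ = (s a - s b) • glE a b := by
  ext i j
  simp only [Ring.lie_def, Matrix.sub_apply, diagonal_mul, mul_diagonal, Matrix.smul_apply, glE,
    single_apply, smul_eq_mul]
  split_ifs with h
  · rw [h.1, h.2]; ring
  · simp

-- `diagonal energyDiag` is twice the conformal Hamiltonian: on a lowest-weight vector it is `2 d`.
def energyDiag : Fin 4 → ℂ := ![1, 1, -1, -1]

lemma fromBlocks_self_neg_mul_fromBlocks_self_neg {n α : Type*} [Fintype n] [Ring α]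
    (A B : Matrix n n α) : fromBlocks A A (-A) (-A) * fromBlocks B B (-B) (-B) = 0 := by
  simp [fromBlocks_multiply, ← fromBlocks_zero]

lemma transP0_lie_transP (k : Fin 3) : ⁅transP0, transP k⁆ = 0 := by
  simp only [transP0, transP, Ring.lie_def, smul_mul_smul, reindex_apply, submatrix_mul_equiv,
    fromBlocks_self_neg_mul_fromBlocks_self_neg, submatrix_zero, sub_self]

lemma transP_lie_transP (k l : Fin 3) : ⁅transP k, transP l⁆ = 0 := by
  simp only [transP, Ring.lie_def, smul_mul_smul, reindex_apply, submatrix_mul_equiv,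
    fromBlocks_self_neg_mul_fromBlocks_self_neg, submatrix_zero, sub_self]

lemma finSumFinEquiv_symm_fin_four (i : Fin 4) :
    (finSumFinEquiv (m := 2) (n := 2)).symm i = ![.inl 0, .inl 1, .inr 0, .inr 1] i := by
  fin_cases i <;> rfl

lemma transP0_add_transP_two : transP0 + transP 2 = glE 0 0 + glE 0 2 - glE 2 0 - glE 2 2 := by
  ext i j
  fin_cases i <;> fin_cases j <;>
    simp [transP0, transP, pauli, glE, one_apply, finSumFinEquiv_symm_fin_four] <;> norm_num

lemma transP0_sub_transP_two : transP0 - transP 2 = glE 1 1 + glE 1 3 - glE 3 1 - glE 3 3 := by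
  ext i j
  fin_cases i <;> fin_cases j <;>
    simp [transP0, transP, pauli, glE, one_apply, finSumFinEquiv_symm_fin_four] <;> norm_num

lemma transP_zero_add_I_smul_transP_one :
    transP 0 + Complex.I • transP 1 = glE 0 1 + glE 0 3 - glE 2 1 - glE 2 3 := by
  ext i j
  fin_cases i <;> fin_cases j <;>
    simp [transP, pauli, glE, finSumFinEquiv_symm_fin_four, mul_left_comm Complex.I] <;> norm_num

lemma transP_zero_sub_I_smul_transP_one :
    transP 0 - Complex.I • transP 1 = glE 1 0 + glE 1 2 - glE 3 0 - glE 3 2 := by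
  ext i j
  fin_cases i <;> fin_cases j <;>
    simp [transP, pauli, glE, finSumFinEquiv_symm_fin_four, mul_left_comm Complex.I] <;> norm_num

section LowestWeight

variable {V : Type*} [AddCommGroup V] [Module ℂ V] [LieRingModule (Matrix (Fin 4) (Fin 4) ℂ) V]
  [LieModule ℂ (Matrix (Fin 4) (Fin 4) ℂ) V]

lemma lie_diagonal_lie_glE (s : Fin 4 → ℂ) (a b : Fin 4) (x : V) :
    ⁅diagonal s, ⁅glE a b, x⁆⁆ = ⁅glE a b, ⁅diagonal s, x⁆⁆ + (s a - s b) • ⁅glE a b, x⁆ := by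
  rw [leibniz_lie, diagonal_lie_glE, smul_lie, add_comm]

lemma mass_eq_lightCone (w : V) :
    ⁅transP0, ⁅transP0, w⁆⁆ - ∑ k, ⁅transP k, ⁅transP k, w⁆⁆ =
      ⁅glE 0 0 + glE 0 2 - glE 2 0 - glE 2 2, ⁅glE 1 1 + glE 1 3 - glE 3 1 - glE 3 3, w⁆⁆ -
        ⁅glE 0 1 + glE 0 3 - glE 2 1 - glE 2 3, ⁅glE 1 0 + glE 1 2 - glE 3 0 - glE 3 2, w⁆⁆ := by
  rw [Fin.sum_univ_three, ← transP0_add_transP_two, ← transP0_sub_transP_two,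
    ← transP_zero_add_I_smul_transP_one, ← transP_zero_sub_I_smul_transP_one,
    ← lie_lie_sub_lie_lie_of_lie_eq_zero (transP0_lie_transP 2),
    ← lie_lie_add_lie_lie_of_lie_eq_zero (transP_lie_transP 0 1) Complex.I_mul_I]
  abel

variable {v : V} {μ : Fin 4 → ℂ}

lemma diagonal_lie_of_weight (hdiag : ∀ a : Fin 4, ⁅glE a a, v⁆ = μ a • v) (s : Fin 4 → ℂ) :
    ⁅diagonal s, v⁆ = (∑ a, s a * μ a) • v := by
  rw [← sum_single_eq_diagonal, sum_lie, Finset.sum_smul]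
  refine Finset.sum_congr rfl fun a _ => ?_
  rw [show single a a (s a) = s a • glE a a by simp [glE, smul_single], smul_lie, hdiag, smul_smul]

lemma mass_apply_of_lowestWeight (hlow : ∀ a b : Fin 4, b < a → ⁅glE a b, v⁆ = 0)
    (hdiag : ∀ a : Fin 4, ⁅glE a a, v⁆ = μ a • v) :
    ⁅transP0, ⁅transP0, v⁆⁆ - ∑ k, ⁅transP k, ⁅transP k, v⁆⁆ =
      ((μ 0 - μ 2) * (μ 1 - μ 3) + μ 2 - μ 1) • v +
        ((μ 1 - μ 3) • ⁅glE 0 2, v⁆ + (μ 0 - μ 2) • ⁅glE 1 3, v⁆ - ⁅glE 0 1, ⁅glE 1 2, v⁆⁆ +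
          ⁅glE 2 3, ⁅glE 1 2, v⁆⁆) +
        (⁅glE 0 2, ⁅glE 1 3, v⁆⁆ - ⁅glE 0 3, ⁅glE 1 2, v⁆⁆) := by
  rw [mass_eq_lightCone]
  simp only [add_lie, sub_lie, lie_add, lie_sub, lie_smul, zero_lie, hdiag, hlow, Fin.isValue,
    Fin.reduceLT, zero_lt_one, fun a b hab => lie_lie_of_lie_eq_zero (hlow a b hab),
    fun a => lie_lie_of_lie_eq_smul (hdiag a), glE_lie, Fin.reduceEq, zero_ne_one, ↓reduceIte,
    sub_zero, sub_self, zero_add]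
  module

lemma energyDiag_lie_of_weight (hdiag : ∀ a : Fin 4, ⁅glE a a, v⁆ = μ a • v) :
    ⁅diagonal energyDiag, v⁆ = (μ 0 + μ 1 - μ 2 - μ 3) • v := by
  rw [diagonal_lie_of_weight hdiag, Fin.sum_univ_four]
  congr 1
  simp [energyDiag, sub_eq_add_neg]

lemma exists_mass_apply_eq_add_weight_vectors (hlow : ∀ a b : Fin 4, b < a → ⁅glE a b, v⁆ = 0)
    (hdiag : ∀ a : Fin 4, ⁅glE a a, v⁆ = μ a • v) :
    ∃ y₂ y₄ : V, ⁅diagonal energyDiag, y₂⁆ = (μ 0 + μ 1 - μ 2 - μ 3 + 2) • y₂ ∧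
      ⁅diagonal energyDiag, y₄⁆ = (μ 0 + μ 1 - μ 2 - μ 3 + 4) • y₄ ∧
      ⁅transP0, ⁅transP0, v⁆⁆ - ∑ k, ⁅transP k, ⁅transP k, v⁆⁆ =
        ((μ 0 - μ 2) * (μ 1 - μ 3) + μ 2 - μ 1) • v + y₂ + y₄ := by
  refine ⟨_, _, ?_, ?_, mass_apply_of_lowestWeight hlow hdiag⟩ <;>
  · simp only [lie_add, lie_sub, lie_smul, lie_diagonal_lie_glE, energyDiag_lie_of_weight hdiag]
    simp only [energyDiag, cons_val_zero, cons_val_one, cons_val]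
    module

end LowestWeight

/-- If a nonzero lowest-weight vector `v` of a `gl(4,ℂ)`-module with lowest weight `μ`
is annihilated by the mass-squared operator `P₀² − Σₖ Pₖ²`, then the conformal labels
`d = ½(μ₁+μ₂−μ₃−μ₄)`, `j₁ = ½(μ₂−μ₁)`, `j₂ = ½(μ₄−μ₃)` satisfy
`d(d−1) = j₁(j₁+1) + j₂(j₂+1) − 2j₁j₂` (indices here are `0`-based). -/
theorem massless_lowest_weight_condition (V : Type*) [AddCommGroup V] [Module ℂ V]
    [LieRingModule (Matrix (Fin 4) (Fin 4) ℂ) V]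
    [LieModule ℂ (Matrix (Fin 4) (Fin 4) ℂ) V]
    (v : V) (hv : v ≠ 0) (μ : Fin 4 → ℂ)
    (hlow : ∀ a b : Fin 4, b < a → ⁅glE a b, v⁆ = 0)
    (hdiag : ∀ a : Fin 4, ⁅glE a a, v⁆ = μ a • v)
    (d j1 j2 : ℂ)
    (hd : d = (1 / 2 : ℂ) * (μ 0 + μ 1 - μ 2 - μ 3))
    (hj1 : j1 = (1 / 2 : ℂ) * (μ 1 - μ 0))
    (hj2 : j2 = (1 / 2 : ℂ) * (μ 3 - μ 2))
    (hmassless : ⁅transP0, ⁅transP0, v⁆⁆ - ∑ k : Fin 3, ⁅transP k, ⁅transP k, v⁆⁆ = 0) :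
    d * (d - 1) = j1 * (j1 + 1) + j2 * (j2 + 1) - 2 * j1 * j2 := by
  obtain ⟨y₂, y₄, hy₂, hy₄, hmass⟩ := exists_mass_apply_eq_add_weight_vectors hlow hdiag
  set c := (μ 0 - μ 2) * (μ 1 - μ 3) + μ 2 - μ 1
  set D := μ 0 + μ 1 - μ 2 - μ 3
  have hcv : ((D - (D + 2)) * (D - (D + 4))) • (c • v) = 0 :=
    (LieModule.toEnd ℂ _ V (diagonal energyDiag)).sub_mul_sub_smul_eq_zero_of_add_add_eq_zero
      (by rw [LieModule.toEnd_apply_apply, lie_smul, energyDiag_lie_of_weight hdiag, smul_comm])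
      hy₂ hy₄ (hmass ▸ hmassless)
  have hc : c = 0 := by
    simpa [hv] using hcv
  rw [hd, hj1, hj2]
  linear_combination hc
end
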